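/- For integers 0 ≤ k ≤ n, let T(n,k) = 2·C(n,k)²·C(2n+2,n)/C(2n+2,2k+1) ∈ ℚ. In the formal power series ring ℚ[a,b][[x]] (with rational coefficients), let F = (a+b)·x/2 + ((b-a)²·x²/8)·∑_{n≥0} (x/4)ⁿ · ∑_{k=0}^{n} T(n,k)·aᵏ·b^{n-k}. Then (1 - F)² = (1 - a·x)·(1 - b·x). -/

import Mathlib

noncomputable section

open MvPolynomial

/-- The triangle A120406: `T(n,k) = 2·C(n,k)²·C(2n+2,n)/C(2n+2,2k+1)`. -/
def Tnk (n k : ℕ) : ℚ :=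
  2 * (n.choose k : ℚ) ^ 2 * ((2 * n + 2).choose n : ℚ) / ((2 * n + 2).choose (2 * k + 1) : ℚ)

/-- `ℚ[a,b]`, polynomials in two variables over `ℚ`. -/
abbrev Rab : Type := MvPolynomial (Fin 2) ℚ

def pa : Rab := X 0
def pb : Rab := X 1

open PowerSeries

lemma Tnk_eq_zero {n k : ℕ} (h : n < k) : Tnk n k = 0 := by
  simp [Tnk, Nat.choose_eq_zero_of_lt h]

lemma Tnk_closed (k j : ℕ) :
    Tnk (k + j) k = 2 * (2*k+1) * (2*j+1) * (Nat.centralBinom k : ℚ) * (Nat.centralBinom j : ℚ)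
      / ((k+j+1) * (k+j+2)) := by
  have h1 : ((k+j).choose k : ℚ) = (k+j).factorial / ((k.factorial : ℚ) * (j.factorial : ℚ)) := by
    rw [Nat.cast_choose ℚ (Nat.le_add_right k j), show k + j - k = j from by omega]
  have h2 : ((2*(k+j)+2).choose (k+j) : ℚ) = (2*(k+j)+2).factorial / ((k+j).factorial * ((k+j)+2).factorial) := by
    rw [Nat.cast_choose ℚ (by omega), show 2*(k+j)+2 - (k+j) = (k+j)+2 from by omega]
  have h3 : ((2*(k+j)+2).choose (2*k+1) : ℚ) = (2*(k+j)+2).factorial / ((2*k+1).factorial * (2*j+1).factorial) := by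
    rw [Nat.cast_choose ℚ (by omega), show 2*(k+j)+2 - (2*k+1) = 2*j+1 from by omega]
  have hcbk : (Nat.centralBinom k : ℚ) = (2*k).factorial / ((k.factorial : ℚ) * k.factorial) := by
    rw [Nat.centralBinom, Nat.cast_choose ℚ (by omega), show 2*k - k = k from by omega]
  have hcbj : (Nat.centralBinom j : ℚ) = (2*j).factorial / (j.factorial * (j.factorial : ℚ)) := by
    rw [Nat.centralBinom, Nat.cast_choose ℚ (by omega), show 2*j - j = j from by omega]
  have hk1 : ((2*k+1).factorial : ℚ) = (2*k+1) * (2*k).factorial := by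
    rw [Nat.factorial_succ]; push_cast; ring
  have hj1 : ((2*j+1).factorial : ℚ) = (2*j+1) * (2*j).factorial := by
    rw [Nat.factorial_succ]; push_cast; ring
  have hn2 : (((k+j)+2).factorial : ℚ) = ((k+j)+2) * ((k+j)+1) * ((k+j).factorial) := by
    rw [Nat.factorial_succ, Nat.factorial_succ]; push_cast; ring
  have hfac : ∀ m : ℕ, ((m.factorial : ℚ)) ≠ 0 := fun m => by positivity
  rw [Tnk, h1, h2, h3, hcbk, hcbj, hk1, hj1, hn2]
  push_cast
  field_simp

lemma cB_succ (p : ℕ) : (Nat.centralBinom (p+1) : ℚ) = 2*(2*p+1) * (Nat.centralBinom p) / (p+1) := by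
  have h := Nat.succ_mul_centralBinom_succ p
  have h2 : ((p:ℚ)+1) * (Nat.centralBinom (p+1) : ℚ) = 2*(2*p+1) * (Nat.centralBinom p) := by
    exact_mod_cast congrArg (Nat.cast : ℕ → ℚ) h
  field_simp
  linarith [h2]

lemma cB_ne (p : ℕ) : (Nat.centralBinom p : ℚ) ≠ 0 := by
  exact_mod_cast Nat.centralBinom_ne_zero p

lemma key_interior (p q : ℕ) :
    2*((p:ℚ)+q+4) * Tnk (p+q+2) (p+1)
      = 4*(2*((p:ℚ)+q)+5) * (Tnk (p+q+1) p + Tnk (p+q+1) (p+1))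
        - 32*((p:ℚ)+q+1) * Tnk (p+q) p := by
  rw [show p+q+2 = (p+1)+(q+1) from by omega, Tnk_closed (p+1) (q+1),
      show p+q+1 = p+(q+1) from by omega, Tnk_closed p (q+1),
      show p+(q+1) = (p+1)+q from by omega, Tnk_closed (p+1) q,
      Tnk_closed p q, cB_succ p, cB_succ q]
  have h1 := cB_ne p
  have h2 := cB_ne q
  have e1 : ((p:ℚ)+1) ≠ 0 := by positivity
  have e2 : ((q:ℚ)+1) ≠ 0 := by positivity
  push_cast
  field_simp
  ring

lemma key_left (m : ℕ) :
    2*((m:ℚ)+4) * Tnk (m+2) 0 = 4*(2*(m:ℚ)+5) * Tnk (m+1) 0 := by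
  have a : Tnk (m+2) 0 = 2 * (2*0+1) * (2*(m+2)+1) * (Nat.centralBinom 0 : ℚ) * (Nat.centralBinom (m+2) : ℚ) / ((0+(m+2)+1) * (0+(m+2)+2)) := by
    have := Tnk_closed 0 (m+2); simpa using this
  have b : Tnk (m+1) 0 = 2 * (2*0+1) * (2*(m+1)+1) * (Nat.centralBinom 0 : ℚ) * (Nat.centralBinom (m+1) : ℚ) / ((0+(m+1)+1) * (0+(m+1)+2)) := by
    have := Tnk_closed 0 (m+1); simpa using this
  rw [a, b, show m+2 = (m+1)+1 from rfl, cB_succ (m+1)]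
  have h1 := cB_ne (m+1)
  have e1 : ((m:ℚ)+2) ≠ 0 := by positivity
  push_cast
  field_simp
  ring

lemma key_right (m : ℕ) :
    2*((m:ℚ)+4) * Tnk (m+2) (m+2) = 4*(2*(m:ℚ)+5) * Tnk (m+1) (m+1) := by
  have a : Tnk (m+2) (m+2) = 2 * (2*(m+2)+1) * (2*0+1) * (Nat.centralBinom (m+2) : ℚ) * (Nat.centralBinom 0 : ℚ) / (((m+2)+0+1) * ((m+2)+0+2)) := by
    have := Tnk_closed (m+2) 0; simpa using this
  have b : Tnk (m+1) (m+1) = 2 * (2*(m+1)+1) * (2*0+1) * (Nat.centralBinom (m+1) : ℚ) * (Nat.centralBinom 0 : ℚ) / (((m+1)+0+1) * ((m+1)+0+2)) := by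
    have := Tnk_closed (m+1) 0; simpa using this
  rw [a, b, show m+2 = (m+1)+1 from rfl, cB_succ (m+1)]
  have h1 := cB_ne (m+1)
  have e1 : ((m:ℚ)+2) ≠ 0 := by positivity
  push_cast
  field_simp
  ring

lemma key (m p : ℕ) (hp : p ≤ m + 1) :
    2*((m:ℚ)+4) * Tnk (m+2) (p+1)
      = 4*(2*(m:ℚ)+5) * (Tnk (m+1) p + Tnk (m+1) (p+1))
        - 32*((m:ℚ)+1) * Tnk m p := by
  rcases Nat.lt_or_ge p (m+1) with h | h
  · obtain ⟨q, rfl⟩ : ∃ q, m = p + q := ⟨m - p, by omega⟩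
    have := key_interior p q
    push_cast at this ⊢
    convert this using 2 <;> push_cast <;> ring_nf
  · have hp' : p = m + 1 := le_antisymm hp h
    subst hp'
    rw [show Tnk (m+1) (m+1+1) = 0 from Tnk_eq_zero (by omega),
        show Tnk m (m+1) = 0 from Tnk_eq_zero (by omega)]
    have := key_right m
    push_cast at this ⊢
    linarith [this]

def Pn (n : ℕ) : Rab := ∑ k ∈ Finset.range (n+1), MvPolynomial.C (Tnk n k) * pa^k * pb^(n-k)

lemma poly_rec (m : ℕ) :
    MvPolynomial.C (2*((m:ℚ)+4)) * Pn (m+2)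
      = MvPolynomial.C (4*(2*(m:ℚ)+5)) * ((pa+pb) * Pn (m+1)) - MvPolynomial.C (32*((m:ℚ)+1)) * (pa * pb * Pn m) := by
  have hL : MvPolynomial.C (2*((m:ℚ)+4)) * Pn (m+2)
      = ∑ k ∈ Finset.range (m+3), MvPolynomial.C (2*((m:ℚ)+4)) * MvPolynomial.C (Tnk (m+2) k) * pa^k * pb^(m+2-k) := by
    rw [Pn, Finset.mul_sum]
    exact Finset.sum_congr rfl fun k _ => by ring
  have hA : MvPolynomial.C (4*(2*(m:ℚ)+5)) * (pa * Pn (m+1))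
      = ∑ p ∈ Finset.range (m+2), MvPolynomial.C (4*(2*(m:ℚ)+5)) * MvPolynomial.C (Tnk (m+1) p) * pa^(p+1) * pb^(m+1-p) := by
    rw [Pn, Finset.mul_sum, Finset.mul_sum]
    exact Finset.sum_congr rfl fun p _ => by ring
  have hB : MvPolynomial.C (4*(2*(m:ℚ)+5)) * (pb * Pn (m+1))
      = ∑ k ∈ Finset.range (m+3), MvPolynomial.C (4*(2*(m:ℚ)+5)) * MvPolynomial.C (Tnk (m+1) k) * pa^k * pb^(m+2-k) := by
    rw [Pn, Finset.mul_sum, Finset.mul_sum, Finset.sum_range_succ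
        (fun k => MvPolynomial.C (4*(2*(m:ℚ)+5)) * MvPolynomial.C (Tnk (m+1) k) * pa^k * pb^(m+2-k)) (m+2),
        Tnk_eq_zero (show m+1 < m+2 by omega)]
    simp only [map_zero, mul_zero, zero_mul, add_zero]
    refine Finset.sum_congr rfl fun k hk => ?_
    rw [Finset.mem_range] at hk
    rw [show m+2-k = (m+1-k)+1 from by omega, pow_succ]
    ring
  have hD : MvPolynomial.C (32*((m:ℚ)+1)) * (pa * pb * Pn m)
      = ∑ p ∈ Finset.range (m+2), MvPolynomial.C (32*((m:ℚ)+1)) * MvPolynomial.C (Tnk m p) * pa^(p+1) * pb^(m+1-p) := by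
    rw [Pn, Finset.mul_sum, Finset.mul_sum, Finset.sum_range_succ
        (fun p => MvPolynomial.C (32*((m:ℚ)+1)) * MvPolynomial.C (Tnk m p) * pa^(p+1) * pb^(m+1-p)) (m+1),
        Tnk_eq_zero (show m < m+1 by omega)]
    simp only [map_zero, mul_zero, zero_mul, add_zero]
    refine Finset.sum_congr rfl fun p hp => ?_
    rw [Finset.mem_range] at hp
    rw [show m+1-p = (m-p)+1 from by omega, pow_succ]
    ring
  have expand : MvPolynomial.C (4*(2*(m:ℚ)+5)) * ((pa+pb) * Pn (m+1))
      = MvPolynomial.C (4*(2*(m:ℚ)+5)) * (pa * Pn (m+1)) + MvPolynomial.C (4*(2*(m:ℚ)+5)) * (pb * Pn (m+1)) := by ring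
  rw [hL, expand, hA, hB, hD,
      Finset.sum_range_succ' _ (m+2),
      Finset.sum_range_succ' (fun k => MvPolynomial.C (4*(2*(m:ℚ)+5)) * MvPolynomial.C (Tnk (m+1) k) * pa^k * pb^(m+2-k)) (m+2)]
  have h0 : MvPolynomial.C (2*((m:ℚ)+4)) * MvPolynomial.C (Tnk (m+2) 0) * pa^0 * pb^(m+2-0)
      = MvPolynomial.C (4*(2*(m:ℚ)+5)) * MvPolynomial.C (Tnk (m+1) 0) * pa^0 * pb^(m+2-0) := by
    have hk := congrArg (C : ℚ → Rab) (key_left m)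
    simp only [map_mul, map_add] at hk ⊢
    linear_combination (pa^0 * pb^(m+2-0)) * hk
  have hsum : ∑ p ∈ Finset.range (m+2),
        MvPolynomial.C (2*((m:ℚ)+4)) * MvPolynomial.C (Tnk (m+2) (p+1)) * pa^(p+1) * pb^(m+2-(p+1))
      = ∑ p ∈ Finset.range (m+2),
          (MvPolynomial.C (4*(2*(m:ℚ)+5)) * MvPolynomial.C (Tnk (m+1) p) * pa^(p+1) * pb^(m+1-p)
           + MvPolynomial.C (4*(2*(m:ℚ)+5)) * MvPolynomial.C (Tnk (m+1) (p+1)) * pa^(p+1) * pb^(m+2-(p+1))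
           - MvPolynomial.C (32*((m:ℚ)+1)) * MvPolynomial.C (Tnk m p) * pa^(p+1) * pb^(m+1-p)) := by
    refine Finset.sum_congr rfl fun p hp => ?_
    rw [Finset.mem_range] at hp
    have hk := congrArg (C : ℚ → Rab) (key m p (by omega))
    simp only [map_mul, map_add, map_sub] at hk ⊢
    rw [show m+2-(p+1) = m+1-p from by omega]
    linear_combination (pa^(p+1) * pb^(m+1-p)) * hk
  rw [h0, hsum, Finset.sum_sub_distrib, Finset.sum_add_distrib]
  ring

abbrev PS : Type := PowerSeries Rab

def Fc : ℕ → Rab := fun m =>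
  if m = 1 then MvPolynomial.C (1 / 2 : ℚ) * (pa + pb)
  else if 2 ≤ m then
    MvPolynomial.C ((1 / 8 : ℚ) * (1 / 4 : ℚ) ^ (m - 2)) * (pb - pa) ^ 2 *
      ∑ k ∈ Finset.range (m - 1),
        MvPolynomial.C (Tnk (m - 2) k) * pa ^ k * pb ^ (m - 2 - k)
  else 0

def Gs : PS := 1 - PowerSeries.mk Fc
def Ss : PS := (1 - PowerSeries.C (R := Rab) pa * PowerSeries.X) * (1 - PowerSeries.C (R := Rab) pb * PowerSeries.X)

lemma coeff_G_zero : PowerSeries.coeff (R := Rab) 0 Gs = 1 := by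
  simp [Gs, Fc]

lemma coeff_G_one : PowerSeries.coeff (R := Rab) 1 Gs = -(MvPolynomial.C (1/2 : ℚ) * (pa + pb)) := by
  simp [Gs, Fc]

lemma coeff_G_two (j : ℕ) :
    PowerSeries.coeff (R := Rab) (j+2) Gs
      = -(MvPolynomial.C ((1/8 : ℚ) * (1/4 : ℚ)^j) * (pb - pa)^2 * Pn j) := by
  have h1 : j + 2 ≠ 1 := by omega
  have h2 : 2 ≤ j + 2 := by omega
  simp only [Gs, Pn, map_sub, PowerSeries.coeff_one, coeff_mk, Fc, if_neg h1, if_pos h2,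
    Nat.add_sub_cancel, show j + 2 - 1 = j + 1 from by omega]
  rw [if_neg (show ¬ (j+2 = 0) from by omega)]
  ring


lemma Pn_zero : Pn 0 = MvPolynomial.C (1 : ℚ) := by
  have : Tnk 0 0 = 1 := by norm_num [Tnk]
  simp [Pn, this]

lemma Pn_one : Pn 1 = MvPolynomial.C (2 : ℚ) * pb + MvPolynomial.C (2 : ℚ) * pa := by
  have h0 : Tnk 1 0 = 2 := by norm_num [Tnk]
  have h1 : Tnk 1 1 = 2 := by norm_num [Tnk]
  simp [Pn, Finset.sum_range_succ, h0, h1]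








def G4 : PS := PowerSeries.rescale (4 : Rab) Gs
def S4 : PS := PowerSeries.rescale (4 : Rab) Ss

lemma coeff_G4_zero : PowerSeries.coeff (R := Rab) 0 G4 = 1 := by
  simp [G4, PowerSeries.coeff_rescale, coeff_G_zero]

lemma coeff_G4_one : PowerSeries.coeff (R := Rab) 1 G4 = -(2 * (pa+pb)) := by
  rw [G4, PowerSeries.coeff_rescale, coeff_G_one, pow_one]
  have hc : (4:Rab) * MvPolynomial.C (1/2:ℚ) = 2 := by
    rw [show (4:Rab) = MvPolynomial.C (4:ℚ) from (map_ofNat _ 4).symm, ← map_mul]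
    norm_num
    exact map_ofNat _ 2
  linear_combination (-(pa+pb)) * hc

lemma coeff_G4_two (j : ℕ) :
    PowerSeries.coeff (R := Rab) (j+2) G4 = -(2 * (pb-pa)^2 * Pn j) := by
  rw [G4, PowerSeries.coeff_rescale, coeff_G_two]
  have hc : (4:Rab)^(j+2) * MvPolynomial.C ((1/8:ℚ)*(1/4:ℚ)^j) = 2 := by
    rw [show (4:Rab) = MvPolynomial.C (4:ℚ) from (map_ofNat _ 4).symm, ← map_pow, ← map_mul,
        show (4:ℚ)^(j+2) * ((1/8)*(1/4:ℚ)^j) = 2 from by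
          rw [show (1/4:ℚ) = (4:ℚ)⁻¹ by norm_num, inv_pow, pow_add]
          have : (4:ℚ)^j ≠ 0 := by positivity
          field_simp
          ring]
    exact map_ofNat _ 2
  linear_combination (-((pb-pa)^2 * Pn j)) * hc

lemma rescale_C (a : Rab) (r : Rab) :
    PowerSeries.rescale a (PowerSeries.C (R := Rab) r) = PowerSeries.C (R := Rab) r := by
  refine PowerSeries.ext fun n => ?_
  rw [PowerSeries.coeff_rescale]
  rcases n with _ | n
  · simp
  · simp [PowerSeries.coeff_C]

lemma S4_eq : S4 = 1 - PowerSeries.C (R := Rab) (4*(pa+pb)) * PowerSeries.X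
    + PowerSeries.C (R := Rab) (16*(pa*pb)) * PowerSeries.X^2 := by
  rw [S4, Ss]
  simp only [map_mul, map_sub, map_one, PowerSeries.rescale_X, rescale_C]
  have h4 : (PowerSeries.C (R := Rab)) ((4:Rab)) = 4 := map_ofNat _ 4
  simp only [map_mul, map_add, map_ofNat, h4]
  ring


lemma dS4_eq : d⁄dX Rab S4 = -PowerSeries.C (R := Rab) (4*(pa+pb))
    + 2 * PowerSeries.C (R := Rab) (16*(pa*pb)) * PowerSeries.X := by
  rw [S4_eq]
  have h1 : d⁄dX Rab (1 : PS) = 0 := by simp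
  have h2 : d⁄dX Rab (PowerSeries.C (R := Rab) (4*(pa+pb)) * PowerSeries.X)
      = PowerSeries.C (R := Rab) (4*(pa+pb)) := by
    simp [Derivation.leibniz]
  have h3 : d⁄dX Rab (PowerSeries.C (R := Rab) (16*(pa*pb)) * PowerSeries.X^2)
      = 2 * PowerSeries.C (R := Rab) (16*(pa*pb)) * PowerSeries.X := by
    simp [Derivation.leibniz, pow_two]
    ring
  rw [map_add, map_sub, h1, h2, h3]
  ring

lemma lhs4_eq (f : PS) : 2 * S4 * f
    = PowerSeries.C (R := Rab) 2 * f
      - PowerSeries.C (R := Rab) (2*(4*(pa+pb))) * (PowerSeries.X * f)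
      + PowerSeries.C (R := Rab) (2*(16*(pa*pb))) * (PowerSeries.X^2 * f) := by
  rw [S4_eq]
  simp only [map_mul, map_add, map_ofNat]
  ring

lemma rhs4_eq (f : PS) : (d⁄dX Rab S4) * f
    = - (PowerSeries.C (R := Rab) (4*(pa+pb)) * f)
      + PowerSeries.C (R := Rab) (2*(16*(pa*pb))) * (PowerSeries.X * f) := by
  rw [dS4_eq]
  simp only [map_mul, map_ofNat]
  ring

lemma ode4 : 2 * S4 * (d⁄dX Rab G4) = (d⁄dX Rab S4) * G4 := by
  refine PowerSeries.ext fun m => ?_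
  rw [lhs4_eq, rhs4_eq]
  simp only [map_add, map_sub, map_neg, PowerSeries.coeff_C_mul]
  rcases m with _|_|_|m
  · -- m = 0
    have hx1 : (PowerSeries.coeff (R := Rab) 0) (PowerSeries.X * d⁄dX Rab G4) = 0 := by
      simp [PowerSeries.coeff_zero_eq_constantCoeff]
    have hx2 : (PowerSeries.coeff (R := Rab) 0) (PowerSeries.X^2 * d⁄dX Rab G4) = 0 := by
      rw [PowerSeries.coeff_X_pow_mul']
      norm_num
    have hx3 : (PowerSeries.coeff (R := Rab) 0) (PowerSeries.X * G4) = 0 := by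
      simp [PowerSeries.coeff_zero_eq_constantCoeff]
    rw [hx1, hx2, hx3]
    simp only [PowerSeries.coeff_derivative]
    rw [show (0:ℕ)+1 = 1 from rfl, coeff_G4_one, coeff_G4_zero]
    push_cast
    ring
  · -- m = 1
    have hx1 : (PowerSeries.coeff (R := Rab) 1) (PowerSeries.X * d⁄dX Rab G4)
        = PowerSeries.coeff (R := Rab) 0 (d⁄dX Rab G4) := PowerSeries.coeff_succ_X_mul 0 _
    have hx2 : (PowerSeries.coeff (R := Rab) 1) (PowerSeries.X^2 * d⁄dX Rab G4) = 0 := by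
      rw [PowerSeries.coeff_X_pow_mul']
      norm_num
    have hx3 : (PowerSeries.coeff (R := Rab) 1) (PowerSeries.X * G4)
        = PowerSeries.coeff (R := Rab) 0 G4 := PowerSeries.coeff_succ_X_mul 0 _
    rw [hx1, hx2, hx3]
    simp only [PowerSeries.coeff_derivative]
    rw [show (1:ℕ)+1 = 0+2 from rfl, coeff_G4_two 0, show (0:ℕ)+1 = 1 from rfl,
        coeff_G4_one, coeff_G4_zero, Pn_zero, map_one]
    push_cast
    ring
  · -- m = 2
    have hx1 : (PowerSeries.coeff (R := Rab) 2) (PowerSeries.X * d⁄dX Rab G4)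
        = PowerSeries.coeff (R := Rab) 1 (d⁄dX Rab G4) := PowerSeries.coeff_succ_X_mul 1 _
    have hx2 : (PowerSeries.coeff (R := Rab) 2) (PowerSeries.X^2 * d⁄dX Rab G4)
        = PowerSeries.coeff (R := Rab) 0 (d⁄dX Rab G4) := PowerSeries.coeff_X_pow_mul _ 2 0
    have hx3 : (PowerSeries.coeff (R := Rab) 2) (PowerSeries.X * G4)
        = PowerSeries.coeff (R := Rab) 1 G4 := PowerSeries.coeff_succ_X_mul 1 _
    rw [hx1, hx2, hx3]
    simp only [PowerSeries.coeff_derivative]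
    rw [show (2:ℕ)+1 = 1+2 from rfl, coeff_G4_two 1, show (1:ℕ)+1 = 0+2 from rfl,
        coeff_G4_two 0, show (0:ℕ)+1 = 1 from rfl, coeff_G4_one,
        Pn_zero, Pn_one, map_one]
    have h2 : (MvPolynomial.C (2:ℚ) : Rab) = 2 := map_ofNat _ 2
    rw [h2]
    push_cast
    ring
  · -- m ≥ 3
    have hx1 : (PowerSeries.coeff (R := Rab) (m+3)) (PowerSeries.X * d⁄dX Rab G4)
        = PowerSeries.coeff (R := Rab) (m+2) (d⁄dX Rab G4) := PowerSeries.coeff_succ_X_mul (m+2) _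
    have hx2 : (PowerSeries.coeff (R := Rab) (m+3)) (PowerSeries.X^2 * d⁄dX Rab G4)
        = PowerSeries.coeff (R := Rab) (m+1) (d⁄dX Rab G4) := PowerSeries.coeff_X_pow_mul _ 2 (m+1)
    have hx3 : (PowerSeries.coeff (R := Rab) (m+3)) (PowerSeries.X * G4)
        = PowerSeries.coeff (R := Rab) (m+2) G4 := PowerSeries.coeff_succ_X_mul (m+2) _
    rw [hx1, hx2, hx3]
    simp only [PowerSeries.coeff_derivative]
    rw [show m+3+1 = (m+2)+2 from rfl, coeff_G4_two (m+2), show m+2+1 = (m+1)+2 from rfl,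
        coeff_G4_two (m+1), show m+1+1 = m+2 from rfl, coeff_G4_two m]
    have h := poly_rec m
    simp only [map_mul, map_add, map_natCast, map_ofNat, map_one] at h
    push_cast
    linear_combination (-(2:Rab) * (pb-pa)^2) * h


lemma mulS4_eq (f : PS) : S4 * f
    = f - PowerSeries.C (R := Rab) (4*(pa+pb)) * (PowerSeries.X * f)
      + PowerSeries.C (R := Rab) (16*(pa*pb)) * (PowerSeries.X^2 * f) := by
  rw [S4_eq]
  ring

lemma unique (y : PS) (h0 : PowerSeries.coeff (R := Rab) 0 y = 0)
    (hode : S4 * (d⁄dX Rab y) = (d⁄dX Rab S4) * y) : y = 0 := by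
  suffices H : ∀ m, PowerSeries.coeff (R := Rab) m y = 0 by
    refine PowerSeries.ext fun m => by rw [H m, map_zero]
  intro m
  induction m using Nat.strong_induction_on with
  | _ m ih =>
  rcases m with _ | m
  · exact h0
  · have hcong := congrArg (PowerSeries.coeff (R := Rab) m) hode
    rw [mulS4_eq, rhs4_eq y] at hcong
    simp only [map_add, map_sub, map_neg, PowerSeries.coeff_C_mul] at hcong
    have e1 : PowerSeries.coeff (R := Rab) m (PowerSeries.X * (d⁄dX Rab y)) = 0 := by
      rcases m with _ | m'
      · simp [PowerSeries.coeff_zero_eq_constantCoeff]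
      · rw [PowerSeries.coeff_succ_X_mul, PowerSeries.coeff_derivative,
            ih (m'+1) (by omega), zero_mul]
    have e2 : PowerSeries.coeff (R := Rab) m (PowerSeries.X^2 * (d⁄dX Rab y)) = 0 := by
      rcases m with _ | _ | m'
      · rw [PowerSeries.coeff_X_pow_mul']; norm_num
      · rw [PowerSeries.coeff_X_pow_mul']; norm_num
      · rw [show m'+2 = m'+2 from rfl, PowerSeries.coeff_X_pow_mul _ 2 m',
            PowerSeries.coeff_derivative, ih (m'+1) (by omega), zero_mul]
    have e3 : PowerSeries.coeff (R := Rab) m y = 0 := ih m (by omega)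
    have e4 : PowerSeries.coeff (R := Rab) m (PowerSeries.X * y) = 0 := by
      rcases m with _ | m'
      · simp [PowerSeries.coeff_zero_eq_constantCoeff]
      · rw [PowerSeries.coeff_succ_X_mul]
        exact ih m' (by omega)
    rw [e1, e2, e3, e4, PowerSeries.coeff_derivative] at hcong
    simp only [mul_zero, sub_zero, add_zero, neg_zero, zero_add] at hcong
    have hne : ((m:Rab) + 1) ≠ 0 := Nat.cast_add_one_ne_zero m
    have := mul_eq_zero.mp hcong
    tauto

lemma G4_sq : G4^2 = S4 := by
  have hpow : d⁄dX Rab (G4^2) = 2 * G4 * (d⁄dX Rab G4) := by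
    rw [pow_two, Derivation.leibniz]
    rw [smul_eq_mul]
    ring
  have h1 : S4 * (d⁄dX Rab (G4^2 - S4)) = (d⁄dX Rab S4) * (G4^2 - S4) := by
    rw [map_sub, hpow]
    linear_combination G4 * ode4
  have h0 : PowerSeries.coeff (R := Rab) 0 (G4^2 - S4) = 0 := by
    have cg : PowerSeries.constantCoeff (R := Rab) G4 = 1 := by
      rw [← PowerSeries.coeff_zero_eq_constantCoeff]
      exact coeff_G4_zero
    have hg : PowerSeries.coeff (R := Rab) 0 (G4^2) = 1 := by
      rw [PowerSeries.coeff_zero_eq_constantCoeff, map_pow, cg, one_pow]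
    have hs : PowerSeries.coeff (R := Rab) 0 S4 = 1 := by
      rw [S4_eq]
      simp
    rw [map_sub, hg, hs, sub_self]
  have := unique _ h0 h1
  exact sub_eq_zero.mp this

lemma Gs_sq : Gs^2 = Ss := by
  have h4 : (4:Rab) ≠ 0 := by norm_num
  apply PowerSeries.rescale_injective h4
  rw [map_pow]
  exact G4_sq


/-- The generating series of A120406:
`F = (a+b)x/2 + ((b-a)²x²/8) ∑_{n≥0} (x/4)ⁿ ∑_{k=0}^n T(n,k) aᵏ b^{n-k}` satisfies
`(1-F)² = (1-ax)(1-bx)`. -/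
theorem a120406_generating_series :
    (1 - PowerSeries.mk (fun m =>
        if m = 1 then MvPolynomial.C (1 / 2 : ℚ) * (pa + pb)
        else if 2 ≤ m then
          MvPolynomial.C ((1 / 8 : ℚ) * (1 / 4 : ℚ) ^ (m - 2)) * (pb - pa) ^ 2 *
            ∑ k ∈ Finset.range (m - 1),
              MvPolynomial.C (Tnk (m - 2) k) * pa ^ k * pb ^ (m - 2 - k)
        else 0)) ^ 2
      = (1 - PowerSeries.C (R := Rab) pa * PowerSeries.X)
        * (1 - PowerSeries.C (R := Rab) pb * PowerSeries.X) := by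
  exact Gs_sq

end
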